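/- arXiv:2101.01330 — 2 statements merged into one kernel-verified Lean document; each statement's English description precedes it below -/
import Mathlib

section
/- Let p : [0, τ] → ℝ solve p'(t) = κ(γ_T(δ(t)) − p(t)) with p(0) = p₀. Then the average work of the finite-time process, μ_W(τ) = (ε/τ) ∫₀^τ p(t) dt, satisfies μ_W(τ) = T ln(Z_T(δ_min)/Z_T(δ_max)) + (ε p₀/(κτ))(1 − e^{−κτ}) − (ε/(κτ))(G(τ) − e^{−κτ} G(0)). -/
/-!
Integrating the relaxation equation `p' = κ (γ - p)` over `[0, τ]` gives
`∫ p = ∫ γ - (p τ - p 0) / κ`, and for linear driving `∫ γ` is an explicit logarithm: this is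
the isothermal work. It remains to know `p τ`. Differentiating term by term, `G` solves the same
equation wherever `exp (-δ / T) < 1`, so `p - G` decays like `exp (-κ t)` and
`p τ = G τ + (p₀ - G 0) exp (-κ τ)`.
-/

open Set

/-- The series `G(t) = -∑_{n=1}^∞ (-exp(-δ(t)/T))^n / (nε/(κτT) + 1)` with the linear
downward driving `δ(t) = δmax - (ε/τ) t`. -/
noncomputable def Gfun (T δmax ε κ τ : ℝ) (t : ℝ) : ℝ :=
  -∑' n : ℕ, (-Real.exp (-(δmax - ε / τ * t) / T)) ^ (n + 1) /
      ((n + 1 : ℝ) * ε / (κ * τ * T) + 1)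

open Real

noncomputable def dampedGeomSeries (c z : ℝ) : ℝ :=
  ∑' n : ℕ, z ^ (n + 1) / ((n + 1) * c + 1)

section DampedGeomSeries

variable {c z : ℝ}

lemma one_le_succ_mul_add_one (hc : 0 ≤ c) (n : ℕ) : 1 ≤ ((n : ℝ) + 1) * c + 1 := by
  nlinarith [n.cast_nonneg (α := ℝ)]

lemma abs_pow_succ_div_le (hc : 0 ≤ c) (n : ℕ) :
    |z ^ (n + 1) / ((n + 1) * c + 1)| ≤ |z| ^ (n + 1) := by
  have h1 := one_le_succ_mul_add_one hc n
  rw [abs_div, abs_pow, abs_of_pos (show (0 : ℝ) < (n + 1) * c + 1 by linarith)]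
  exact div_le_self (by positivity) h1

lemma summable_pow_succ_of_abs_lt_one (hz : |z| < 1) : Summable fun n : ℕ => z ^ (n + 1) :=
  (summable_nat_add_iff 1).2 (summable_geometric_of_abs_lt_one hz)

lemma tsum_pow_succ_of_abs_lt_one (hz : |z| < 1) : ∑' n : ℕ, z ^ (n + 1) = z / (1 - z) := by
  simp_rw [pow_succ', tsum_mul_left, tsum_geometric_of_abs_lt_one hz, div_eq_mul_inv]

lemma summable_dampedGeomSeries (hc : 0 ≤ c) (hz : |z| < 1) :
    Summable fun n : ℕ => z ^ (n + 1) / ((n + 1) * c + 1) :=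
  .of_norm_bounded (summable_pow_succ_of_abs_lt_one (by rwa [abs_abs]))
    fun n => abs_pow_succ_div_le hc n

/- Since `(n + 1) / ((n + 1) c + 1) = (1 - 1 / ((n + 1) c + 1)) / c`, the differentiated series is
a geometric series minus the original one. -/
lemma hasDerivAt_pow_succ_neg_exp_div (n : ℕ) (hc : 0 < c) (s : ℝ) :
    HasDerivAt (fun s => (-exp s) ^ (n + 1) / ((n + 1) * c + 1))
      (((-exp s) ^ (n + 1) - (-exp s) ^ (n + 1) / ((n + 1) * c + 1)) / c) s := by
  have hw : ((n : ℝ) + 1) * c + 1 ≠ 0 := by linarith [one_le_succ_mul_add_one hc.le n]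
  refine (((hasDerivAt_exp s).neg.pow (n + 1)).div_const _).congr_deriv ?_
  simp only [Pi.neg_apply]
  field_simp
  push_cast
  ring

theorem hasDerivAt_dampedGeomSeries_neg_exp (hc : 0 < c) {s : ℝ} (hs : s < 0) :
    HasDerivAt (fun s => dampedGeomSeries c (-exp s))
      ((-exp s / (1 + exp s) - dampedGeomSeries c (-exp s)) / c) s := by
  have hq : exp (s / 2) < 1 := exp_lt_one_iff.2 (by linarith)
  have hgeom := summable_pow_succ_of_abs_lt_one (by rwa [abs_of_pos (exp_pos (s / 2))])
  have habs : ∀ y ∈ Iio (s / 2), |-exp y| ≤ exp (s / 2) := fun y hy => by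
    rw [abs_neg, abs_of_pos (exp_pos y)]; exact exp_le_exp.2 (le_of_lt hy)
  have hs' : s ∈ Iio (s / 2) := by rw [mem_Iio]; linarith
  have hz : |-exp s| < 1 := (habs s hs').trans_lt hq
  have hderiv := hasDerivAt_tsum_of_isPreconnected
    (u := fun n => (exp (s / 2) ^ (n + 1) + exp (s / 2) ^ (n + 1)) / c)
    ((hgeom.add hgeom).div_const c)
    isOpen_Iio isPreconnected_Iio (fun n y _ => hasDerivAt_pow_succ_neg_exp_div n hc y)
    (fun n y hy => by
      rw [norm_div, Real.norm_of_nonneg hc.le]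
      gcongr
      refine (norm_sub_le _ _).trans (add_le_add ?_ ?_)
      · rw [Real.norm_eq_abs, abs_pow]; exact pow_le_pow_left₀ (abs_nonneg _) (habs y hy) _
      · exact (abs_pow_succ_div_le hc.le n).trans
          (pow_le_pow_left₀ (abs_nonneg _) (habs y hy) _))
    hs' (summable_dampedGeomSeries hc.le hz) hs'
  refine hderiv.congr_deriv ?_
  rw [tsum_div_const, (summable_pow_succ_of_abs_lt_one hz).tsum_sub
    (summable_dampedGeomSeries hc.le hz), tsum_pow_succ_of_abs_lt_one hz, sub_neg_eq_add,
    dampedGeomSeries]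

end DampedGeomSeries

lemma Gfun_eq_neg_dampedGeomSeries (T δmax ε κ τ t : ℝ) :
    Gfun T δmax ε κ τ t =
      -dampedGeomSeries (ε / (κ * τ * T)) (-exp (-(δmax - ε / τ * t) / T)) := by
  simp only [Gfun, dampedGeomSeries, mul_div_assoc]

theorem hasDerivAt_Gfun {T δmax ε κ τ t : ℝ} (hT : 0 < T) (hε : 0 < ε) (hκ : 0 < κ)
    (hτ : 0 < τ) (ht : 0 < δmax - ε / τ * t) :
    HasDerivAt (Gfun T δmax ε κ τ)
      (κ * (1 / (1 + exp ((δmax - ε / τ * t) / T)) - Gfun T δmax ε κ τ t)) t := by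
  have hexponent : HasDerivAt (fun t => -(δmax - ε / τ * t) / T) (ε / τ / T) t := by
    simpa using (((hasDerivAt_id t).const_mul (ε / τ)).const_sub δmax).neg.div_const T
  have hs : -(δmax - ε / τ * t) / T < 0 := div_neg_of_neg_of_pos (neg_neg_of_pos ht) hT
  have hseries := ((hasDerivAt_dampedGeomSeries_neg_exp (c := ε / (κ * τ * T)) (by positivity)
    hs).comp t hexponent).neg
  rw [show Gfun T δmax ε κ τ = _ from funext (Gfun_eq_neg_dampedGeomSeries T δmax ε κ τ)]
  refine hseries.congr_deriv ?_
  rw [show (δmax - ε / τ * t) / T = -(-(δmax - ε / τ * t) / T) by ring, exp_neg]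
  field_simp
  ring

theorem eq_mul_exp_of_hasDerivWithinAt_neg_mul {d : ℝ → ℝ} {κ a b : ℝ} (hab : a ≤ b)
    (hd : ∀ t ∈ Icc a b, HasDerivWithinAt d (-κ * d t) (Icc a b) t) :
    d b = d a * exp (-κ * (b - a)) := by
  have hconst : ∀ t ∈ Icc a b, exp (κ * t) * d t = exp (κ * a) * d a := by
    have hderiv : ∀ t ∈ Icc a b, HasDerivWithinAt (fun t => exp (κ * t) * d t) 0 (Icc a b) t :=
      fun t ht => by
        have hexp : HasDerivAt (fun t => exp (κ * t)) (exp (κ * t) * κ) t := by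
          simpa using ((hasDerivAt_id t).const_mul κ).exp
        exact (hexp.hasDerivWithinAt.mul (hd t ht)).congr_deriv (by ring)
    refine constant_of_has_deriv_right_zero (fun t ht => (hderiv t ht).continuousWithinAt)
      fun t ht => (hderiv t (Ico_subset_Icc_self ht)).mono_of_mem_nhdsWithin ?_
    exact Icc_mem_nhdsGE_of_mem ht
  have := hconst b ⟨hab, le_rfl⟩
  rw [show -κ * (b - a) = κ * a - κ * b by ring, exp_sub]
  field_simp
  linarith

theorem integral_eq_of_hasDerivWithinAt_relaxation {p f : ℝ → ℝ} {κ a b : ℝ}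
    (hκ : κ ≠ 0) (hab : a ≤ b) (hf : IntervalIntegrable f MeasureTheory.volume a b)
    (hp : ∀ t ∈ Icc a b, HasDerivWithinAt p (κ * (f t - p t)) (Icc a b) t) :
    ∫ t in a..b, p t = (∫ t in a..b, f t) - (p b - p a) / κ := by
  have hpcont : ContinuousOn p (Icc a b) := fun t ht => (hp t ht).continuousWithinAt
  have hpint : IntervalIntegrable p MeasureTheory.volume a b :=
    hpcont.intervalIntegrable_of_Icc hab
  have hftc : ∫ t in a..b, κ * (f t - p t) = p b - p a :=
    intervalIntegral.integral_eq_sub_of_hasDerivAt_of_le hab hpcont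
      (fun t ht => (hp t (Ioo_subset_Icc_self ht)).hasDerivAt (Icc_mem_nhds ht.1 ht.2))
      ((hf.sub hpint).const_mul κ)
  rw [intervalIntegral.integral_const_mul, intervalIntegral.integral_sub hf hpint] at hftc
  rw [← hftc]
  field_simp
  ring

lemma continuous_fermi_linear (T k u : ℝ) : Continuous fun t => 1 / (1 + exp ((u - k * t) / T)) :=
  continuous_const.div (by fun_prop) fun t => by positivity

theorem integral_fermi_linear {T k u a b : ℝ} (hT : T ≠ 0) (hk : k ≠ 0) :
    ∫ t in a..b, 1 / (1 + exp ((u - k * t) / T)) =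
      T / k * (log (1 + exp (-(u - k * b) / T)) - log (1 + exp (-(u - k * a) / T))) := by
  have hderiv : ∀ t, HasDerivAt (fun t => T / k * log (1 + exp (-(u - k * t) / T)))
      (1 / (1 + exp ((u - k * t) / T))) t := fun t => by
    have hexponent : HasDerivAt (fun t => -(u - k * t) / T) (k / T) t := by
      simpa using (((hasDerivAt_id t).const_mul k).const_sub u).neg.div_const T
    refine (((hexponent.exp.const_add 1).log (by positivity)).const_mul (T / k)).congr_deriv ?_
    rw [neg_div, exp_neg]
    field_simp
    ring
  rw [intervalIntegral.integral_eq_sub_of_hasDerivAt (fun t _ => hderiv t)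
    ((continuous_fermi_linear T k u).intervalIntegrable _ _), mul_sub]

theorem stmt3_general (T δmin δmax τ κ p₀ : ℝ)
    (hT : 0 < T) (hmin : 0 < δmin) (hlt : δmin < δmax) (hτ : 0 < τ) (hκ : 0 < κ)
    (p : ℝ → ℝ) (hp0 : p 0 = p₀)
    (hp : ∀ t ∈ Icc (0 : ℝ) τ,
      HasDerivWithinAt p
        (κ * (1 / (1 + Real.exp ((δmax - (δmax - δmin) / τ * t) / T)) - p t))
        (Icc 0 τ) t) :
    (δmax - δmin) / τ * ∫ t in (0 : ℝ)..τ, p t =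
      T * Real.log ((1 + Real.exp (-δmin / T)) / (1 + Real.exp (-δmax / T)))
      + (δmax - δmin) * p₀ / (κ * τ) * (1 - Real.exp (-κ * τ))
      - (δmax - δmin) / (κ * τ) *
          (Gfun T δmax (δmax - δmin) κ τ τ
            - Real.exp (-κ * τ) * Gfun T δmax (δmax - δmin) κ τ 0) := by
  set ε := δmax - δmin with hε_def
  set G := Gfun T δmax ε κ τ
  have hε : 0 < ε := sub_pos.2 hlt
  have hδτ : δmax - ε / τ * τ = δmin := by rw [div_mul_cancel₀ _ hτ.ne', hε_def]; ring
  have hG : ∀ t ∈ Icc 0 τ,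
      HasDerivAt G (κ * (1 / (1 + exp ((δmax - ε / τ * t) / T)) - G t)) t := fun t ht => by
    refine hasDerivAt_Gfun hT hε hκ hτ (lt_of_lt_of_le (hδτ ▸ hmin) ?_)
    gcongr
    exact ht.2
  have hpτ : p τ = G τ + (p₀ - G 0) * exp (-κ * τ) := by
    have := eq_mul_exp_of_hasDerivWithinAt_neg_mul (d := fun t => p t - G t) hτ.le
      fun t ht => ((hp t ht).sub (hG t ht).hasDerivWithinAt).congr_deriv (by ring)
    rw [hp0, sub_zero] at this
    linarith
  rw [integral_eq_of_hasDerivWithinAt_relaxation hκ.ne' hτ.le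
      ((continuous_fermi_linear _ _ _).intervalIntegrable _ _) hp,
    integral_fermi_linear hT.ne' (by positivity), hpτ, hp0, hδτ, mul_zero, sub_zero,
    log_div (by positivity) (by positivity)]
  field_simp
  ring

/-- if `p` solves `p' = κ (γ_T(δ(t)) − p)` with `p 0 = p₀`, then the average
work `μ_W(τ) = (ε/τ) ∫₀^τ p(t) dt` equals
`T ln(Z(δmin)/Z(δmax)) + (ε p₀/(κτ)) (1 − e^{−κτ}) − (ε/(κτ)) (G(τ) − e^{−κτ} G(0))`,
where `Z(δ) = 1 + exp(−δ/T)`. -/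
theorem stmt3 (T δmin δmax τ κ p₀ : ℝ)
    (hT : 0 < T) (hmin : 0 < δmin) (hlt : δmin < δmax) (hτ : 0 < τ) (hκ : 0 < κ)
    (hp₀ : p₀ ∈ Icc (0 : ℝ) 1)
    (p : ℝ → ℝ) (hp0 : p 0 = p₀)
    (hp : ∀ t ∈ Icc (0 : ℝ) τ,
      HasDerivWithinAt p
        (κ * (1 / (1 + Real.exp ((δmax - (δmax - δmin) / τ * t) / T)) - p t))
        (Icc 0 τ) t) :
    (δmax - δmin) / τ * ∫ t in (0 : ℝ)..τ, p t =
      T * Real.log ((1 + Real.exp (-δmin / T)) / (1 + Real.exp (-δmax / T)))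
      + (δmax - δmin) * p₀ / (κ * τ) * (1 - Real.exp (-κ * τ))
      - (δmax - δmin) / (κ * τ) *
          (Gfun T δmax (δmax - δmin) κ τ τ
            - Real.exp (-κ * τ) * Gfun T δmax (δmax - δmin) κ τ 0) :=
  stmt3_general T δmin δmax τ κ p₀ hT hmin hlt hτ hκ p hp0 hp
end

section
/- Define the lower-bound function LB(τ) = (1 − p₀) R^{−κτT/ε} M(τ)² + p₀ e^{−κτ} R^{κτT/ε} (ε − M(τ))², where R = Z_T(δ_min)/Z_T(δ_max) and M(τ) is the average-work function. Then lim_{τ → 0⁺} LB(τ) = p₀ (1 − p₀) ε², which equals the variance of work for the adiabatic process; hence the variance lower bound is saturated in the adiabatic limit. -/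
open Set Filter

/-- `G_τ(u) = -∑_{n=1}^∞ (-exp(-u/T))^n / (nε/(κτT) + 1)`. -/
noncomputable def Gser (T ε κ τ u : ℝ) : ℝ :=
  -∑' n : ℕ, (-Real.exp (-u / T)) ^ (n + 1) / ((n + 1 : ℝ) * ε / (κ * τ * T) + 1)

/-- The average-work function `M(τ)`. -/
noncomputable def Mavg (T δmin δmax κ p₀ τ : ℝ) : ℝ :=
  T * Real.log ((1 + Real.exp (-δmin / T)) / (1 + Real.exp (-δmax / T)))
    + (δmax - δmin) * p₀ / (κ * τ) * (1 - Real.exp (-κ * τ))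
    - (δmax - δmin) / (κ * τ) *
        (Gser T (δmax - δmin) κ τ δmin - Real.exp (-κ * τ) * Gser T (δmax - δmin) κ τ δmax)

/-- The variance lower-bound function
`LB(τ) = (1 − p₀) R^{−κτT/ε} M(τ)² + p₀ e^{−κτ} R^{κτT/ε} (ε − M(τ))²`,
with `R = Z(δmin)/Z(δmax)`, `Z(δ) = 1 + exp(−δ/T)`, `ε = δmax − δmin`;
real exponents use the real power function. -/
noncomputable def LB (T δmin δmax κ p₀ τ : ℝ) : ℝ :=
  (1 - p₀) * ((1 + Real.exp (-δmin / T)) / (1 + Real.exp (-δmax / T))) ^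
      (-(κ * τ * T / (δmax - δmin))) * (Mavg T δmin δmax κ p₀ τ) ^ 2
  + p₀ * Real.exp (-κ * τ) *
      ((1 + Real.exp (-δmin / T)) / (1 + Real.exp (-δmax / T))) ^
        (κ * τ * T / (δmax - δmin)) *
      ((δmax - δmin) - Mavg T δmin δmax κ p₀ τ) ^ 2

/-
As `τ → 0⁺` the factors `R^{±κτT/ε}` and `e^{-κτ}` tend to `1`, and `M(τ) → p₀ ε`:
`ε p₀ (1 - e^{-κτ})/(κτ) → ε p₀`, while `(ε/(κτ)) G_τ(u) = T ∑ₙ (-1)ⁿ⁺¹ yⁿ/(n + κτT/ε)` with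
`y = e^{-u/T} < 1` tends, by dominated convergence, to the logarithm series
`T log (1 + y) = T log Z_T(u)`, and these cancel the `T log R` term. Hence
`LB(τ) → (1 - p₀) (p₀ ε)² + p₀ ((1 - p₀) ε)² = p₀ (1 - p₀) ε²`.
-/
open Real Topology

lemma tendsto_one_sub_exp_neg_div_self :
    Tendsto (fun x => (1 - exp (-x)) / x) (𝓝[≠] 0) (𝓝 1) := by
  have h : HasDerivAt (fun x => 1 - exp (-x)) 1 0 := by
    simpa using ((hasDerivAt_neg 0).exp).const_sub 1
  refine (hasDerivAt_iff_tendsto_slope.1 h).congr fun x => ?_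
  simp [slope_def_field]

lemma tendsto_exp_neg_mul_nhdsWithin_zero (κ : ℝ) (s : Set ℝ) :
    Tendsto (fun τ => exp (-κ * τ)) (𝓝[s] 0) (𝓝 1) := by
  have h : Continuous fun τ : ℝ => exp (-κ * τ) := by fun_prop
  simpa using (h.tendsto 0).mono_left nhdsWithin_le_nhds

lemma tendsto_tsum_pow_succ_div_add {y : ℝ} (hy : |y| < 1) :
    Tendsto (fun s : ℝ => ∑' n : ℕ, y ^ (n + 1) / (n + 1 + s)) (𝓝[≥] 0)
      (𝓝 (-log (1 - y))) := by
  rw [← (hasSum_pow_div_log_of_abs_lt_one hy).tsum_eq]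
  refine tendsto_tsum_of_dominated_convergence (bound := fun n => |y| ^ (n + 1)) ?_ ?_ ?_
  · exact ((summable_geometric_of_lt_one (abs_nonneg y) hy).mul_left |y|).congr
      fun n => (pow_succ' _ _).symm
  · intro n
    have hden : Tendsto (fun s : ℝ => (n + 1 + s : ℝ)) (𝓝[≥] 0) (𝓝 (n + 1)) := by
      have h : Continuous fun s : ℝ => (n + 1 + s : ℝ) := by fun_prop
      simpa using (h.tendsto 0).mono_left nhdsWithin_le_nhds
    exact tendsto_const_nhds.div hden (by positivity)
  · filter_upwards [self_mem_nhdsWithin] with s (hs : 0 ≤ s) n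
    have hden : 1 ≤ (n + 1 + s : ℝ) := by linarith [(n.cast_nonneg : (0 : ℝ) ≤ n)]
    rw [norm_div, norm_pow, norm_eq_abs, norm_of_nonneg (by linarith)]
    exact div_le_self (by positivity) hden

lemma div_mul_Gser_eq {T ε κ τ : ℝ} (u : ℝ) (hT : T ≠ 0) (hε : ε ≠ 0) (hκ : κ ≠ 0)
    (hτ : τ ≠ 0) :
    ε / (κ * τ) * Gser T ε κ τ u =
      -T * ∑' n : ℕ, (-exp (-u / T)) ^ (n + 1) / (n + 1 + κ * τ * T / ε) := by
  have hc : κ * τ * T / ε ≠ 0 := by positivity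
  have hterm : ∀ n : ℕ, (-exp (-u / T)) ^ (n + 1) / ((n + 1 : ℝ) * ε / (κ * τ * T) + 1) =
      κ * τ * T / ε * ((-exp (-u / T)) ^ (n + 1) / (n + 1 + κ * τ * T / ε)) := by
    intro n
    rw [← div_div_eq_mul_div, div_add_one hc, div_div_eq_mul_div]
    ring
  have hcoef : ε / (κ * τ) * (κ * τ * T / ε) = T := by field_simp
  rw [Gser, tsum_congr hterm, tsum_mul_left, mul_neg, ← mul_assoc, hcoef, neg_mul]

lemma tendsto_div_mul_Gser {T ε κ u : ℝ} (hT : 0 < T) (hε : 0 < ε) (hκ : 0 < κ)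
    (hu : 0 < u) :
    Tendsto (fun τ => ε / (κ * τ) * Gser T ε κ τ u) (𝓝[>] 0)
      (𝓝 (T * log (1 + exp (-u / T)))) := by
  have hy : |-exp (-u / T)| < 1 := by
    rw [abs_neg, abs_of_pos (exp_pos _), exp_lt_one_iff, neg_div, neg_lt_zero]
    positivity
  have hs : Tendsto (fun τ => κ * τ * T / ε) (𝓝[>] 0) (𝓝[≥] 0) := by
    refine tendsto_nhdsWithin_of_tendsto_nhds_of_eventually_within _ ?_ ?_
    · have h : Continuous fun τ : ℝ => κ * τ * T / ε := by fun_prop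
      simpa using (h.tendsto 0).mono_left nhdsWithin_le_nhds
    · filter_upwards [self_mem_nhdsWithin] with τ (hτ : 0 < τ)
      exact (by positivity : (0 : ℝ) ≤ κ * τ * T / ε)
  have hlim := ((tendsto_tsum_pow_succ_div_add hy).comp hs).const_mul (-T)
  rw [sub_neg_eq_add, mul_neg, neg_mul, neg_neg] at hlim
  refine hlim.congr' ?_
  filter_upwards [self_mem_nhdsWithin] with τ (hτ : 0 < τ)
  rw [div_mul_Gser_eq u hT.ne' hε.ne' hκ.ne' hτ.ne']
  rfl

lemma tendsto_Mavg {T δmin δmax κ : ℝ} (p₀ : ℝ)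
    (hT : 0 < T) (hmin : 0 < δmin) (hlt : δmin < δmax) (hκ : 0 < κ) :
    Tendsto (Mavg T δmin δmax κ p₀) (𝓝[>] 0) (𝓝 (p₀ * (δmax - δmin))) := by
  set ε := δmax - δmin
  set Z : ℝ → ℝ := fun δ => 1 + exp (-δ / T)
  have hε : 0 < ε := sub_pos.2 hlt
  have hκτ : Tendsto (fun τ => κ * τ) (𝓝[>] 0) (𝓝[≠] 0) :=
    (tendsto_iff_comap.2 (comap_mulLeft_nhdsGT_zero hκ).ge).mono_right
      (nhdsWithin_mono _ fun x (hx : 0 < x) => hx.ne')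
  have hlim := (tendsto_const_nhds (x := T * log (Z δmin / Z δmax))).add
    ((tendsto_one_sub_exp_neg_div_self.comp hκτ).const_mul (ε * p₀)) |>.sub
    ((tendsto_div_mul_Gser hT hε hκ hmin).sub
      ((tendsto_exp_neg_mul_nhdsWithin_zero κ _).mul
        (tendsto_div_mul_Gser hT hε hκ (hmin.trans hlt))))
  have hval : T * log (Z δmin / Z δmax) + ε * p₀ * 1
      - (T * log (Z δmin) - 1 * (T * log (Z δmax))) = p₀ * ε := by
    rw [log_div (by positivity) (by positivity)]
    ring
  rw [hval] at hlim
  refine hlim.congr' ?_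
  filter_upwards [self_mem_nhdsWithin] with τ (hτ : 0 < τ)
  simp only [Function.comp_apply, Mavg, neg_mul, ε, Z]
  ring

theorem stmt11_general (T δmin δmax κ p₀ : ℝ)
    (hT : 0 < T) (hmin : 0 < δmin) (hlt : δmin < δmax) (hκ : 0 < κ) :
    Tendsto (fun τ => LB T δmin δmax κ p₀ τ) (nhdsWithin 0 (Ioi 0))
      (nhds (p₀ * (1 - p₀) * (δmax - δmin) ^ 2)) := by
  set R := (1 + exp (-δmin / T)) / (1 + exp (-δmax / T))
  have hR : R ≠ 0 := by positivity
  have hexpo : Tendsto (fun τ => κ * τ * T / (δmax - δmin)) (𝓝[>] 0) (𝓝 0) := by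
    have h : Continuous fun τ : ℝ => κ * τ * T / (δmax - δmin) := by fun_prop
    simpa using (h.tendsto 0).mono_left nhdsWithin_le_nhds
  have hpow : ∀ {f : ℝ → ℝ}, Tendsto f (𝓝[>] 0) (𝓝 0) →
      Tendsto (fun τ => R ^ f τ) (𝓝[>] 0) (𝓝 1) := fun hf => by
    have h := (continuousAt_const_rpow (b := 0) hR).tendsto.comp hf
    rwa [rpow_zero] at h
  have hM := tendsto_Mavg p₀ hT hmin hlt hκ
  have hLB := (((tendsto_const_nhds (x := 1 - p₀)).mul (hpow (by simpa using hexpo.neg))).mul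
    (hM.pow 2)).add ((((tendsto_const_nhds (x := p₀)).mul
      (tendsto_exp_neg_mul_nhdsWithin_zero κ _)).mul (hpow hexpo)).mul
        (((tendsto_const_nhds (x := δmax - δmin)).sub hM).pow 2))
  unfold LB
  convert hLB using 2
  ring

/-- `LB(τ) → p₀ (1 − p₀) ε²` as `τ → 0⁺`, the variance of the
adiabatic work distribution: the lower bound is saturated in the adiabatic limit. -/
theorem stmt11 (T δmin δmax κ p₀ : ℝ)
    (hT : 0 < T) (hmin : 0 < δmin) (hlt : δmin < δmax) (hκ : 0 < κ)
    (hp₀ : p₀ ∈ Icc (0 : ℝ) 1) :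
    Tendsto (fun τ => LB T δmin δmax κ p₀ τ) (nhdsWithin 0 (Ioi 0))
      (nhds (p₀ * (1 - p₀) * (δmax - δmin) ^ 2)) :=
  stmt11_general T δmin δmax κ p₀ hT hmin hlt hκ
end
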